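/- arXiv:1111.4791 — 3 statements merged into one kernel-verified Lean document; each statement's English description precedes it below -/
import Mathlib

section
/- For any element x of a unital associative ℂ-algebra, scalars a, d ∈ ℂ, and m ∈ ℕ, one has Σ_{r+s=m} ((-1)^s / (r! s!)) · x_a^{[r]} · x_d^{<s>} = binom(a-d, m) · 1, where binom(z, m) = z(z-1)⋯(z-m+1)/m! is the generalized binomial coefficient. -/
noncomputable def rise {A : Type*} [Ring A] [Algebra ℂ A] (x : A) (a : ℂ) : ℕ → A
  | 0 => 1
  | r + 1 => rise x a r * (x + algebraMap ℂ A (a + r))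

noncomputable def fall {A : Type*} [Ring A] [Algebra ℂ A] (x : A) (a : ℂ) : ℕ → A
  | 0 => 1
  | r + 1 => fall x a r * (x + algebraMap ℂ A (a - r))

/-- The generalized binomial coefficient $\binom{z}{m} = z(z-1)\cdots(z-m+1)/m!$. -/
noncomputable def gbinom (z : ℂ) (m : ℕ) : ℂ :=
  (∏ i ∈ Finset.range m, (z - i)) / (m.factorial : ℂ)

/-!
`fall x a r` is the descending Pochhammer polynomial `t (t - 1) ⋯ (t - r + 1)` evaluated at
`x + a`, and `(-1) ^ s • rise x d s` is the same polynomial of degree `s` evaluated at `-x - d`.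
These two arguments commute and add up to the scalar `a - d`, so the Chu–Vandermonde identity for
descending Pochhammer polynomials at commuting elements of a ring gives
`m! binom(a - d, m) = ∑_{r+s=m} (m choose r) x_a^{[r]} (-1)^s x_d^{<s>}`; now divide by `m!`.
-/

open Polynomial Finset

section
variable {A : Type*} [Ring A] [Algebra ℂ A]

theorem fall_eq_smeval_descPochhammer (x : A) (a : ℂ) (r : ℕ) :
    fall x a r = (descPochhammer ℤ r).smeval (x + algebraMap ℂ A a) := by
  induction r with
  | zero => simp [fall]
  | succ r ih =>
    rw [fall, ih, descPochhammer_succ_right, smeval_mul, smeval_sub, smeval_X, smeval_natCast]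
    simp only [sub_eq_add_neg, map_add, map_neg, map_natCast, pow_one, pow_zero, nsmul_eq_mul,
      mul_one, add_assoc]

theorem fall_neg_neg (x : A) (a : ℂ) (r : ℕ) :
    fall (-x) (-a) r = ((-1 : ℂ) ^ r) • rise x a r := by
  induction r with
  | zero => simp [fall, rise]
  | succ r ih =>
    have h : -x + algebraMap ℂ A (-a - r) = -(x + algebraMap ℂ A (a + r)) := by
      simp only [map_sub, map_neg, map_add]; abel
    rw [fall, rise, ih, h, pow_succ, mul_smul, smul_mul_assoc, mul_neg, neg_one_smul]

theorem fall_add {x y : A} (h : Commute x y) (a b : ℂ) (m : ℕ) :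
    fall (x + y) (a + b) m =
      ∑ ij ∈ antidiagonal m, (m.choose ij.1 : A) * (fall x a ij.1 * fall y b ij.2) := by
  have hxy : x + y + algebraMap ℂ A (a + b) = (x + algebraMap ℂ A a) + (y + algebraMap ℂ A b) := by
    rw [map_add]; abel
  have hc : Commute (x + algebraMap ℂ A a) (y + algebraMap ℂ A b) :=
    (h.add_right (Algebra.commute_algebraMap_right b x)).add_left
      ((Algebra.commute_algebraMap_left a y).add_right (Algebra.commute_algebraMap_left a _))
  simp only [fall_eq_smeval_descPochhammer, hxy]
  exact Ring.descPochhammer_smeval_add m hc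

theorem fall_zero_left (z : ℂ) (m : ℕ) :
    fall (0 : A) z m = algebraMap ℂ A (∏ i ∈ range m, (z - i)) := by
  induction m with
  | zero => simp [fall]
  | succ m ih => rw [fall, ih, zero_add, prod_range_succ, map_mul]
end

theorem factorial_mul_gbinom (z : ℂ) (m : ℕ) :
    (m.factorial : ℂ) * gbinom z m = ∏ i ∈ range m, (z - i) :=
  mul_div_cancel₀ _ (Nat.cast_ne_zero.mpr m.factorial_ne_zero)

theorem fall_rise_sum {A : Type*} [Ring A] [Algebra ℂ A] (x : A) (a d : ℂ) (m : ℕ) :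
    ∑ p ∈ Finset.HasAntidiagonal.antidiagonal m,
      (((-1 : ℂ) ^ p.2 / ((p.1.factorial : ℂ) * (p.2.factorial : ℂ))) •
        (fall x a p.1 * rise x d p.2)) = gbinom (a - d) m • (1 : A) := by
  have vandermonde := fall_add (Commute.neg_right (Commute.refl x)) a (-d) m
  rw [add_neg_cancel, ← sub_eq_add_neg, fall_zero_left, ← factorial_mul_gbinom] at vandermonde
  simp only [fall_neg_neg] at vandermonde
  have hm : (m.factorial : ℂ) ≠ 0 := Nat.cast_ne_zero.mpr m.factorial_ne_zero
  refine smul_right_injective A hm ?_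
  dsimp only
  rw [smul_smul, ← Algebra.algebraMap_eq_smul_one, vandermonde, smul_sum]
  refine sum_congr rfl fun ⟨i, j⟩ hij => ?_
  obtain rfl : i + j = m := mem_antidiagonal.mp hij
  dsimp only
  rw [mul_smul_comm, ← nsmul_eq_mul ((i + j).choose i), ← Nat.cast_smul_eq_nsmul ℂ, smul_smul,
    smul_smul, Nat.cast_add_choose]
  congr 1
  field_simp
end

section
/- Let A be a unital associative ℂ-algebra with elements T, E satisfying [T,E] = E, and let c ∈ ℂ. In A[[t]], define J_c = Σ_{i≥0} ((−1)^i/i!)·T_{−c}^{[i]}·E^i·t^i and 𝕁_c = Σ_{i≥0} (1/i!)·T_c^{[i]}·E^i·t^i. Then 𝕁_c · J_{−c} = 1, i.e., 𝕁_c is invertible in A[[t]] with inverse J_{−c}. -/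
/-!
From `[T, E] = E` one gets `E ^ i * T_a^{[j]} = T_{a-i}^{[j]} * E ^ i`, and with
`T_c^{[i+j]} = T_c^{[i]} * T_{c-i}^{[j]}` the elements `X i = T_c^{[i]} * E ^ i` satisfy
`X i * X j = X (i + j)`. Hence `f ↦ ∑ fᵢ Xᵢ tⁱ` is multiplicative from `ℂ⟦t⟧` to `A⟦t⟧`, and the
two series are the images of `exp t` and `exp (-t)`, whose product is `1`.
-/

open PowerSeries Finset

theorem PowerSeries.mk_smul_mul_mk_smul {R A : Type*} [CommSemiring R] [Semiring A]
    [Algebra R A] (x : ℕ → A) (hx : ∀ i j, x i * x j = x (i + j)) (f g : R⟦X⟧) :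
    (mk fun i => coeff i f • x i) * (mk fun i => coeff i g • x i) =
      mk fun n => coeff n (f * g) • x n := by
  ext n
  simp only [coeff_mul, coeff_mk, smul_mul_smul_comm, hx, sum_smul]
  exact sum_congr rfl fun p hp => by rw [mem_antidiagonal.mp hp]

section Fall

variable {A : Type*} [Ring A] [Algebra ℂ A]

theorem fall_add_s17 (T : A) (a : ℂ) (i j : ℕ) :
    fall T a (i + j) = fall T a i * fall T (a - i) j := by
  induction j with
  | zero => simp [fall]
  | succ j ih =>
    rw [← add_assoc, fall, ih, fall, mul_assoc, Nat.cast_add, sub_sub]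

section Commutator

variable {T E : A} (h : T * E - E * T = E)
include h

theorem mul_add_algebraMap_of_commutator_eq (b : ℂ) :
    E * (T + algebraMap ℂ A b) = (T + algebraMap ℂ A (b - 1)) * E := by
  have hET : E * T = T * E - E := by rw [eq_sub_iff_add_eq, ← eq_sub_iff_add_eq', h]
  rw [mul_add, hET, map_sub, map_one, add_mul, sub_mul, one_mul, Algebra.commutes]
  abel

theorem mul_fall_of_commutator_eq (a : ℂ) (j : ℕ) :
    E * fall T a j = fall T (a - 1) j * E := by
  induction j with
  | zero => simp [fall]
  | succ j ih =>
    rw [fall, ← mul_assoc, ih, mul_assoc, mul_add_algebraMap_of_commutator_eq h, ← mul_assoc,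
      fall, sub_right_comm]

theorem pow_mul_fall_of_commutator_eq (a : ℂ) (i j : ℕ) :
    E ^ i * fall T a j = fall T (a - i) j * E ^ i := by
  induction i generalizing a with
  | zero => simp
  | succ i ih =>
    rw [pow_succ, mul_assoc, mul_fall_of_commutator_eq h, ← mul_assoc, ih, mul_assoc, ← pow_succ,
      Nat.cast_succ, sub_sub, add_comm (i : ℂ)]

theorem fall_mul_pow_mul_fall_mul_pow_of_commutator_eq (c : ℂ) (i j : ℕ) :
    fall T c i * E ^ i * (fall T c j * E ^ j) = fall T c (i + j) * E ^ (i + j) := by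
  rw [mul_assoc, ← mul_assoc (E ^ i), pow_mul_fall_of_commutator_eq h, mul_assoc, ← pow_add,
    ← mul_assoc, ← fall_add_s17]

end Commutator

end Fall

theorem PowerSeries.mk_inv_factorial : (mk fun i => (1 : ℂ) / i.factorial) = exp ℂ := by
  ext n; simp [coeff_exp]

theorem PowerSeries.mk_neg_one_pow_div_factorial :
    (mk fun i => (-1 : ℂ) ^ i / i.factorial) = evalNegHom (exp ℂ) := by
  ext n; simp [coeff_exp, evalNegHom, div_eq_mul_inv]

theorem J_inverse {A : Type*} [Ring A] [Algebra ℂ A] (T E : A)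
    (h : T * E - E * T = E) (c : ℂ) :
    (PowerSeries.mk fun i =>
        (((1 : ℂ) / (i.factorial : ℂ)) • (fall T c i * E ^ i) : A)) *
      (PowerSeries.mk fun i =>
        (((-1 : ℂ) ^ i / (i.factorial : ℂ)) • (fall T c i * E ^ i) : A)) = 1 := by
  have key := mk_smul_mul_mk_smul _ (fall_mul_pow_mul_fall_mul_pow_of_commutator_eq h c)
    (exp ℂ) (evalNegHom (exp ℂ))
  rw [exp_mul_exp_neg_eq_one, ← mk_neg_one_pow_div_factorial, ← mk_inv_factorial] at key
  simp only [coeff_mk] at key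
  rw [key]
  ext n
  rcases n with _ | n <;> simp [coeff_one, fall]
end

section
/- Let A be a unital associative ℂ-algebra with elements T, E, D satisfying [T,E] = E, [T,D] = 0 and [D,E] = λ·E for some λ ∈ ℂ. Then in A[[t]], with J_c = Σ_{i≥0} ((−1)^i/i!)·T_{−c}^{[i]}·E^i·t^i, one has D·J_c = J_c·D − λ·J_c·T_{−c}·E·t. -/
/-!
The series `J` satisfies a first-order recursion in its coefficients: the `(n+1)`-st is the
`n`-th multiplied on the right by `(T - c) * E`, up to the scalar `-1/(n+1)`. Since `D` commutes
with `T`, it commutes with the falling factorial, while `[D, E^(n+1)] = (n+1) λ E^(n+1)`;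
the factor `n+1` cancels the scalar, which turns `[D, J]` into `-λ J (T - c) E t`.
-/

theorem mul_pow_eq_of_mul_sub_mul_eq_smul {R A : Type*} [CommSemiring R] [Ring A]
    [Algebra R A] {x y : A} {r : R} (h : x * y - y * x = r • y) (n : ℕ) :
    x * y ^ n = y ^ n * x + (n * r) • y ^ n := by
  have hxy : x * y = y * x + r • y := by rw [← h, add_sub_cancel]
  induction n with
  | zero => simp
  | succ n ih =>
    calc x * y ^ (n + 1) = x * y ^ n * y := by rw [pow_succ, mul_assoc]
      _ = y ^ n * (x * y) + (n * r) • y ^ (n + 1) := by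
        rw [ih, add_mul, mul_assoc, smul_mul_assoc, pow_succ]
      _ = y ^ (n + 1) * x + ((n + 1 : ℕ) * r) • y ^ (n + 1) := by
        rw [hxy, mul_add, ← mul_assoc, ← pow_succ, mul_smul_comm, ← pow_succ]
        push_cast
        rw [add_mul, one_mul, add_smul]
        abel

theorem neg_one_pow_succ_div_factorial_mul {K : Type*} [Field K] [CharZero K] (n : ℕ) :
    (-1 : K) ^ (n + 1) / (n + 1).factorial * (n + 1) = -((-1) ^ n / n.factorial) := by
  rw [Nat.factorial_succ, Nat.cast_mul, pow_succ]
  field_simp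
  push_cast
  ring

section Fall

variable {A : Type*} [Ring A] [Algebra ℂ A]

theorem Commute.fall {x T : A} (h : Commute x T) (a : ℂ) (n : ℕ) : Commute x (fall T a n) := by
  induction n with
  | zero => exact Commute.one_right x
  | succ n ih => exact ih.mul_right (h.add_right (Algebra.commute_algebraMap_right _ x))

theorem pow_mul_add_algebraMap {T E : A} (hTE : T * E - E * T = E) (a : ℂ) (n : ℕ) :
    E ^ n * (T + algebraMap ℂ A a) = (T + algebraMap ℂ A (a - n)) * E ^ n := by
  have hT := mul_pow_eq_of_mul_sub_mul_eq_smul (x := T) (r := (1 : ℂ))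
    (by rwa [one_smul]) n
  rw [mul_one, Algebra.smul_def, map_natCast] at hT
  rw [mul_add, ← Algebra.commutes, map_sub, map_natCast, sub_eq_add_neg (algebraMap ℂ A a),
    add_mul, add_mul, ← add_assoc, neg_mul, hT]
  abel

theorem fall_mul_pow_mul {T E : A} (hTE : T * E - E * T = E) (a : ℂ) (n : ℕ) :
    fall T a n * E ^ n * ((T + algebraMap ℂ A a) * E) = fall T a (n + 1) * E ^ (n + 1) := by
  calc fall T a n * E ^ n * ((T + algebraMap ℂ A a) * E)
      = fall T a n * (E ^ n * (T + algebraMap ℂ A a)) * E := by noncomm_ring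
    _ = fall T a n * (T + algebraMap ℂ A (a - n)) * (E ^ n * E) := by
      rw [pow_mul_add_algebraMap hTE]; noncomm_ring
    _ = fall T a (n + 1) * E ^ (n + 1) := by rw [← pow_succ]; rfl

theorem mul_smul_fall_mul_pow_succ {T E D : A} {l : ℂ} (hTE : T * E - E * T = E)
    (hTD : Commute D T) (hDE : D * E - E * D = l • E) (a : ℂ) (n : ℕ) :
    D * (((-1 : ℂ) ^ (n + 1) / (n + 1).factorial) • (fall T a (n + 1) * E ^ (n + 1))) =
      (((-1 : ℂ) ^ (n + 1) / (n + 1).factorial) • (fall T a (n + 1) * E ^ (n + 1))) * D -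
        l • ((((-1 : ℂ) ^ n / n.factorial) • (fall T a n * E ^ n)) *
          ((T + algebraMap ℂ A a) * E)) := by
  set s : ℂ := (-1) ^ (n + 1) / (n + 1).factorial
  set F := fall T a (n + 1) * E ^ (n + 1)
  have hs : s * ((n + 1 : ℕ) * l) = -(l * ((-1) ^ n / n.factorial)) := by
    rw [← mul_assoc, Nat.cast_succ, neg_one_pow_succ_div_factorial_mul, neg_mul, mul_comm]
  calc D * (s • F) = s • (fall T a (n + 1) * (D * E ^ (n + 1))) := by
        rw [mul_smul_comm, ← mul_assoc, (hTD.fall a _).eq, mul_assoc]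
    _ = s • F * D + (s * ((n + 1 : ℕ) * l)) • F := by
        rw [mul_pow_eq_of_mul_sub_mul_eq_smul hDE, mul_add, ← mul_assoc, mul_smul_comm,
          smul_add, smul_smul, smul_mul_assoc]
    _ = _ := by
        rw [hs, smul_mul_assoc ((-1 : ℂ) ^ n / n.factorial), fall_mul_pow_mul hTE,
          smul_smul, neg_smul, sub_eq_add_neg]

end Fall

theorem PowerSeries.C_mul_mk_eq_mk_mul_C_sub_smul {R A : Type*} [CommSemiring R] [Ring A]
    [Algebra R A] {f : ℕ → A} {x y : A} {r : R} (h₀ : x * f 0 = f 0 * x)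
    (hsucc : ∀ n, x * f (n + 1) = f (n + 1) * x - r • (f n * y)) :
    C x * mk f = mk f * C x - r • (mk f * C y * X) := by
  ext (_ | n)
  · simpa [coeff_C_mul, coeff_mul_C] using h₀
  · simpa [coeff_C_mul, coeff_mul_C, coeff_succ_mul_X] using hsucc n

theorem D_mul_J {A : Type*} [Ring A] [Algebra ℂ A] (T E D : A) (l : ℂ)
    (hTE : T * E - E * T = E) (hTD : T * D - D * T = 0) (hDE : D * E - E * D = l • E)
    (c : ℂ) :
    let J : PowerSeries A := PowerSeries.mk fun i =>
      ((-1 : ℂ) ^ i / (i.factorial : ℂ)) • (fall T (-c) i * E ^ i)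
    (PowerSeries.C (R := A) D) * J =
      J * PowerSeries.C (R := A) D -
        l • (J * PowerSeries.C (R := A) ((T - algebraMap ℂ A c) * E) * PowerSeries.X) := by
  intro J
  rw [sub_eq_add_neg T, ← map_neg]
  refine PowerSeries.C_mul_mk_eq_mk_mul_C_sub_smul ?_ fun n => ?_
  · simp [fall]
  · exact mul_smul_fall_mul_pow_succ hTE (sub_eq_zero.mp hTD).symm hDE (-c) n
end
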